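/- arXiv:1709.02087 — 5 statements merged into one kernel-verified Lean document; each statement's English description precedes it below -/
import Mathlib

section
/- If F_3(p) = F_2(p)^2, then p is the uniform distribution on its support, i.e., p_i = F_2(p) for every i with p_i > 0. -/
/-!
Since `∑ pᵢ = 1`, the variance-type identity `F₃ - F₂² = ∑ pᵢ (pᵢ - F₂)²` holds, so the
hypothesis makes a sum of nonnegative terms vanish; each term with `pᵢ > 0` then forces
`pᵢ = F₂`.
-/

open Finset

section

variable {ι R : Type*} {s : Finset ι} {p : ι → R}

theorem sum_mul_sub_sq_eq_sum_pow_three_sub_sq [CommRing R] (hsum : ∑ i ∈ s, p i = 1) :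
    ∑ i ∈ s, p i * (p i - ∑ j ∈ s, p j ^ 2) ^ 2
      = ∑ i ∈ s, p i ^ 3 - (∑ i ∈ s, p i ^ 2) ^ 2 := by
  set F := ∑ j ∈ s, p j ^ 2
  calc ∑ i ∈ s, p i * (p i - F) ^ 2
      = ∑ i ∈ s, p i ^ 3 - 2 * F * ∑ i ∈ s, p i ^ 2 + F ^ 2 * ∑ i ∈ s, p i := by
        simp only [mul_sum, ← sum_sub_distrib, ← sum_add_distrib]
        exact sum_congr rfl fun i _ => by ring
    _ = ∑ i ∈ s, p i ^ 3 - F ^ 2 := by rw [hsum]; ring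

theorem eq_of_pos_of_sum_mul_sub_sq_eq_zero [CommRing R] [LinearOrder R] [IsStrictOrderedRing R]
    {c : R} (hp : ∀ i ∈ s, 0 ≤ p i) (h : ∑ i ∈ s, p i * (p i - c) ^ 2 = 0)
    {i : ι} (hi : i ∈ s) (hpos : 0 < p i) : p i = c := by
  have hterm : p i * (p i - c) ^ 2 = 0 :=
    (sum_eq_zero_iff_of_nonneg fun j hj => mul_nonneg (hp j hj) (sq_nonneg _)).mp h i hi
  have hsq : (p i - c) ^ 2 = 0 := (mul_eq_zero.mp hterm).resolve_left hpos.ne'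
  exact sub_eq_zero.mp (pow_eq_zero_iff two_ne_zero |>.mp hsq)

end

/-- If `F₃(p) = F₂(p)²`, then `p` is uniform on its support:
`p_i = F₂(p)` for every `i` with `p_i > 0`. -/
theorem stmt2 {Ω : Type*} [Fintype Ω] (p : Ω → ℝ)
    (hp : ∀ i, 0 ≤ p i) (hsum : ∑ i, p i = 1)
    (hF : ∑ i, p i ^ 3 = (∑ i, p i ^ 2) ^ 2) :
    ∀ i, 0 < p i → p i = ∑ j, p j ^ 2 := by
  have hvar : ∑ i, p i * (p i - ∑ j, p j ^ 2) ^ 2 = 0 := by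
    rw [sum_mul_sub_sq_eq_sum_pow_three_sub_sq hsum, hF, sub_self]
  exact fun i hpos =>
    eq_of_pos_of_sum_mul_sub_sq_eq_zero (fun j _ => hp j) hvar (mem_univ i) hpos
end

section
/- Let p be a probability distribution on a finite set Ω and let x ∈ [0,1]. If ∑_{i∈Ω} min(p_i, |x − p_i|) = δ, then there exists a nonempty subset S ⊆ Ω (namely S = {i : p_i > x/2}) such that the total variation distance between p and the uniform distribution on S is at most 2δ (equivalently ‖p − u_S‖_1 ≤ 2δ). Consequently, if d_TV(p, u_T) ≥ ε for every nonempty subset T ⊆ Ω, then ∑_i min(p_i, |x − p_i|) ≥ ε/2 for all x ∈ [0,1]. -/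
/-!
Let `c` be the pseudo-distribution equal to `x` on `S = {i | x/2 < p i}` and `0` elsewhere.
The choice of `S` makes `|p i - c i| = min (p i) |x - p i|` for every `i`, so `‖p - c‖₁ = δ`.
Since `c` is constant on `S`, `‖c - u_S‖₁ = |1 - ‖c‖₁| = |∑ i, (p i - c i)| ≤ ‖p - c‖₁`, and the
triangle inequality gives `‖p - u_S‖₁ ≤ 2δ`. If `S` is empty then `δ = ∑ i, p i = 1`, and every
`u_T` is within `2` of `p`.
-/

open Finset

section

variable {Ω : Type*} [DecidableEq Ω]

/-- The pseudo-distribution `c_{x,S}`; the uniform distribution `u_S` is `constOn S (1 / #S)`. -/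
def constOn (S : Finset Ω) (x : ℝ) (i : Ω) : ℝ :=
  if i ∈ S then x else 0

theorem abs_constOn_sub_constOn (S : Finset Ω) (x y : ℝ) (i : Ω) :
    |constOn S x i - constOn S y i| = constOn S |x - y| i := by
  by_cases hi : i ∈ S <;> simp [constOn, hi]

variable [Fintype Ω]

theorem sum_constOn (S : Finset Ω) (x : ℝ) : ∑ i, constOn S x i = S.card * x := by
  simp [constOn, sum_ite_mem]

theorem l1_constOn_sub_constOn (S : Finset Ω) (x y : ℝ) :
    ∑ i, |constOn S x i - constOn S y i| = S.card * |x - y| := by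
  simp only [abs_constOn_sub_constOn, sum_constOn]

theorem l1_constOn_sub_uniform_le {p : Ω → ℝ} (hsum : ∑ i, p i = 1) {S : Finset Ω}
    (hS : S.Nonempty) (x : ℝ) :
    ∑ i, |constOn S x i - constOn S (1 / S.card) i| ≤ ∑ i, |p i - constOn S x i| := by
  have hcard : (0 : ℝ) < S.card := by exact_mod_cast hS.card_pos
  calc ∑ i, |constOn S x i - constOn S (1 / S.card) i|
      = |∑ i, (p i - constOn S x i)| := by
        rw [l1_constOn_sub_constOn, sum_sub_distrib, hsum, sum_constOn, ← abs_of_pos hcard,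
          ← abs_mul, abs_of_pos hcard, mul_sub, mul_one_div_cancel hcard.ne', abs_sub_comm]
    _ ≤ ∑ i, |p i - constOn S x i| := abs_sum_le_sum_abs _ _

theorem l1_sub_uniform_le_two_mul_l1_sub_constOn {p : Ω → ℝ} (hsum : ∑ i, p i = 1)
    {S : Finset Ω} (hS : S.Nonempty) (x : ℝ) :
    ∑ i, |p i - constOn S (1 / S.card) i| ≤ 2 * ∑ i, |p i - constOn S x i| := by
  calc ∑ i, |p i - constOn S (1 / S.card) i|
      ≤ ∑ i, (|p i - constOn S x i| + |constOn S x i - constOn S (1 / S.card) i|) :=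
        sum_le_sum fun i _ => abs_sub_le _ _ _
    _ ≤ 2 * ∑ i, |p i - constOn S x i| := by
        rw [sum_add_distrib]
        linarith [l1_constOn_sub_uniform_le hsum hS x]

theorem l1_sub_uniform_le_two {p : Ω → ℝ} (hp : ∀ i, 0 ≤ p i) (hsum : ∑ i, p i = 1)
    {S : Finset Ω} (hS : S.Nonempty) :
    ∑ i, |p i - constOn S (1 / S.card) i| ≤ 2 := by
  have hcard : (S.card : ℝ) ≠ 0 := by exact_mod_cast hS.card_pos.ne'
  have hu : ∀ i, 0 ≤ constOn S (1 / S.card) i := fun i => by unfold constOn; positivity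
  calc ∑ i, |p i - constOn S (1 / S.card) i|
      ≤ ∑ i, (p i + constOn S (1 / S.card) i) := sum_le_sum fun i _ => by
        rw [abs_sub_le_iff]; constructor <;> linarith [hp i, hu i]
    _ = 2 := by rw [sum_add_distrib, hsum, sum_constOn, mul_one_div_cancel hcard]; norm_num

/-- On `S = {i | x/2 < p i}`, `c_{x,S}` is the point of `{0, x}` nearest to `p i`. -/
theorem abs_sub_constOn_superlevel {p : Ω → ℝ} (hp : ∀ i, 0 ≤ p i) {x : ℝ} (hx : 0 ≤ x)
    (i : Ω) :
    |p i - constOn {j | x / 2 < p j} x i| = min (p i) |x - p i| := by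
  by_cases hi : x / 2 < p i
  · have hle : |x - p i| ≤ p i := abs_sub_le_iff.mpr ⟨by linarith, by linarith⟩
    simp [constOn, hi, min_eq_right hle, abs_sub_comm]
  · have hle : p i ≤ |x - p i| := by rw [abs_of_nonneg (by linarith)]; linarith
    simp [constOn, hi, min_eq_left hle, abs_of_nonneg (hp i)]

theorem exists_l1_sub_uniform_le {p : Ω → ℝ} (hp : ∀ i, 0 ≤ p i) (hsum : ∑ i, p i = 1)
    {x : ℝ} (hx : 0 ≤ x) :
    ∃ S : Finset Ω, S.Nonempty ∧
      ∑ i, |p i - constOn S (1 / S.card) i| ≤ 2 * ∑ i, min (p i) |x - p i| := by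
  set S : Finset Ω := {j | x / 2 < p j}
  have hδ : ∑ i, |p i - constOn S x i| = ∑ i, min (p i) |x - p i| :=
    sum_congr rfl fun i _ => abs_sub_constOn_superlevel hp hx i
  rcases S.eq_empty_or_nonempty with hS | hS
  · have hΩ : Nonempty Ω := by
      by_contra h
      simp [not_nonempty_iff.mp h] at hsum
    obtain ⟨i₀⟩ := hΩ
    have hδ_eq_one : ∑ i, min (p i) |x - p i| = 1 := by
      simpa [← hδ, hS, constOn, abs_of_nonneg (hp _)] using hsum
    refine ⟨{i₀}, singleton_nonempty i₀, ?_⟩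
    rw [hδ_eq_one, mul_one]
    exact l1_sub_uniform_le_two hp hsum (singleton_nonempty i₀)
  · exact ⟨S, hS, hδ ▸ l1_sub_uniform_le_two_mul_l1_sub_constOn hsum hS x⟩

end

theorem stmt3_general {Ω : Type*} [Fintype Ω] [DecidableEq Ω] (p : Ω → ℝ)
    (hp : ∀ i, 0 ≤ p i) (hsum : ∑ i, p i = 1)
    (x : ℝ) (hx : x ∈ Set.Icc (0 : ℝ) 1) (δ ε : ℝ)
    (hδ : δ = ∑ i, min (p i) |x - p i|) :
    (∃ S : Finset Ω, S.Nonempty ∧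
        ∑ i, |p i - (if i ∈ S then (1 : ℝ) / S.card else 0)| ≤ 2 * δ) ∧
      ((∀ T : Finset Ω, T.Nonempty →
          ε ≤ (1 / 2) * ∑ i, |p i - (if i ∈ T then (1 : ℝ) / T.card else 0)|) →
        ε / 2 ≤ ∑ i, min (p i) |x - p i|) := by
  obtain ⟨S, hS, hS_close⟩ := exists_l1_sub_uniform_le hp hsum hx.1
  unfold constOn at hS_close
  have hδ_nonneg : 0 ≤ δ := hδ ▸ sum_nonneg fun i _ => le_min (hp i) (abs_nonneg _)
  rw [← hδ] at hS_close ⊢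
  exact ⟨⟨S, hS, hS_close⟩, fun hfar => by linarith [hfar S hS]⟩

/-- If `∑ min(p_i, |x − p_i|) = δ` for `x ∈ [0,1]`, there is a nonempty `S` with
`‖p − u_S‖₁ ≤ 2δ`; consequently, if `p` is `ε`-far in total variation from every
uniform distribution on a nonempty subset, then `∑ min(p_i, |x − p_i|) ≥ ε/2`. -/
theorem stmt3 {Ω : Type*} [Fintype Ω] [DecidableEq Ω] [Nonempty Ω] (p : Ω → ℝ)
    (hp : ∀ i, 0 ≤ p i) (hsum : ∑ i, p i = 1)
    (x : ℝ) (hx : x ∈ Set.Icc (0 : ℝ) 1) (δ ε : ℝ)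
    (hδ : δ = ∑ i, min (p i) |x - p i|) :
    (∃ S : Finset Ω, S.Nonempty ∧
        ∑ i, |p i - (if i ∈ S then (1 : ℝ) / S.card else 0)| ≤ 2 * δ) ∧
      ((∀ T : Finset Ω, T.Nonempty →
          ε ≤ (1 / 2) * ∑ i, |p i - (if i ∈ T then (1 : ℝ) / T.card else 0)|) →
        ε / 2 ≤ ∑ i, min (p i) |x - p i|) :=
  stmt3_general p hp hsum x hx δ ε hδ
end

section
/- Let p be a probability distribution on a finite set Ω such that d_TV(p, u_S) ≥ ε for every nonempty subset S ⊆ Ω, where 0 < ε ≤ 1. Then F_3(p) − F_2(p)^2 ≥ ε^2 F_2(p)^2 / 64. -/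
/-!
Let `F₂ = ∑ pᵢ²` and `T = {i | |F₂ - pᵢ| ≤ pᵢ}`, which is nonempty because `F₂ ≤ max pᵢ`.
Comparing `p` with `u_T` through the intermediate level `F₂` shows
`d_TV(p, u_T) ≤ ∑ᵢ min(pᵢ, |F₂ - pᵢ|)`, so this sum is at least `ε`. Each term satisfies
`F₂ · min(pᵢ, |F₂ - pᵢ|) ≤ 2 pᵢ |pᵢ - F₂|`, whence `ε F₂ ≤ 2 ∑ pᵢ |pᵢ - F₂|`, and by
Cauchy–Schwarz the square of the right-hand side is at most `4 ∑ pᵢ (pᵢ - F₂)² = 4 (F₃ - F₂²)`.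
-/

open Finset

section WeightedSums

variable {ι : Type*} [Fintype ι] {w : ι → ℝ}

lemma sq_sum_mul_abs_le_sum_mul_sq (hw : ∀ i, 0 ≤ w i) (hsum : ∑ i, w i = 1) (x : ι → ℝ) :
    (∑ i, w i * |x i|) ^ 2 ≤ ∑ i, w i * x i ^ 2 := by
  simpa [hsum] using sum_sq_le_sum_mul_sum_of_sq_le_mul univ (fun i _ => hw i)
    (fun i _ => mul_nonneg (hw i) (sq_nonneg (x i)))
    (fun i _ => le_of_eq (by rw [mul_pow, sq_abs]; ring))

lemma sum_mul_sub_sq_eq (hsum : ∑ i, w i = 1) (x : ι → ℝ) :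
    ∑ i, w i * (x i - ∑ j, w j * x j) ^ 2 = ∑ i, w i * x i ^ 2 - (∑ j, w j * x j) ^ 2 := by
  set m := ∑ j, w j * x j
  calc ∑ i, w i * (x i - m) ^ 2
      = ∑ i, w i * x i ^ 2 - 2 * m * ∑ i, w i * x i + m ^ 2 * ∑ i, w i := by
        simp only [mul_sum, ← sum_sub_distrib, ← sum_add_distrib]
        exact sum_congr rfl fun i _ => by ring
    _ = ∑ i, w i * x i ^ 2 - m ^ 2 := by rw [hsum]; ring

lemma exists_sum_sq_le (hw : ∀ i, 0 ≤ w i) (hsum : ∑ i, w i = 1) : ∃ i, ∑ j, w j ^ 2 ≤ w i := by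
  have hne : (univ : Finset ι).Nonempty := nonempty_of_sum_ne_zero (by rw [hsum]; exact one_ne_zero)
  obtain ⟨i, -, hmax⟩ := exists_max_image univ w hne
  refine ⟨i, ?_⟩
  calc ∑ j, w j ^ 2 ≤ ∑ j, w j * w i :=
        sum_le_sum fun j hj => by rw [sq]; exact mul_le_mul_of_nonneg_left (hmax j hj) (hw j)
    _ = w i := by rw [← sum_mul, hsum, one_mul]

variable [DecidableEq ι]

lemma sum_abs_sub_uniform_le (hw : ∀ i, 0 ≤ w i) (hsum : ∑ i, w i = 1) {T : Finset ι}
    (hT : T.Nonempty) (c : ℝ) :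
    ∑ i, |w i - (if i ∈ T then (1 : ℝ) / T.card else 0)|
      ≤ 2 * (∑ i ∈ T, |w i - c| + ∑ i ∈ Tᶜ, w i) := by
  set t : ℝ := (T.card : ℝ)
  have ht : 0 < t := by simpa [t] using hT.card_pos
  have hsplit : ∑ i, |w i - (if i ∈ T then 1 / t else 0)|
      = ∑ i ∈ T, |w i - 1 / t| + ∑ i ∈ Tᶜ, w i := by
    rw [← sum_add_sum_compl T]
    congr 1
    · exact sum_congr rfl fun i hi => by rw [if_pos hi]
    · exact sum_congr rfl fun i hi => by
        rw [if_neg (mem_compl.mp hi), sub_zero, abs_of_nonneg (hw i)]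
  -- `t * c - 1` is the mass `T` would gain if every `wᵢ` on `T` were moved to `c`.
  have hmass : |t * c - 1| ≤ ∑ i ∈ T, |w i - c| + ∑ i ∈ Tᶜ, w i := by
    have hdecomp : t * c - 1 = ∑ i ∈ T, (c - w i) - ∑ i ∈ Tᶜ, w i := by
      rw [sum_sub_distrib, sum_const, nsmul_eq_mul, ← hsum, ← sum_add_sum_compl T]; ring
    rw [hdecomp]
    calc _ ≤ |∑ i ∈ T, (c - w i)| + |∑ i ∈ Tᶜ, w i| := abs_sub _ _
      _ ≤ ∑ i ∈ T, |w i - c| + ∑ i ∈ Tᶜ, w i := by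
        gcongr
        · exact (abs_sum_le_sum_abs _ _).trans_eq (sum_congr rfl fun i _ => abs_sub_comm _ _)
        · exact (abs_of_nonneg (sum_nonneg fun i _ => hw i)).le
  have hscale : t * |c - 1 / t| = |t * c - 1| := by
    rw [show t * c - 1 = t * (c - 1 / t) by field_simp, abs_mul, abs_of_pos ht]
  calc ∑ i, |w i - (if i ∈ T then 1 / t else 0)|
      = ∑ i ∈ T, |w i - 1 / t| + ∑ i ∈ Tᶜ, w i := hsplit
    _ ≤ ∑ i ∈ T, (|w i - c| + |c - 1 / t|) + ∑ i ∈ Tᶜ, w i := by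
        gcongr with i
        exact abs_sub_le _ _ _
    _ = ∑ i ∈ T, |w i - c| + |t * c - 1| + ∑ i ∈ Tᶜ, w i := by
        rw [sum_add_distrib, sum_const, nsmul_eq_mul, hscale]
    _ ≤ 2 * (∑ i ∈ T, |w i - c| + ∑ i ∈ Tᶜ, w i) := by linarith

lemma le_sum_min_abs_sub (hw : ∀ i, 0 ≤ w i) (hsum : ∑ i, w i = 1) {ε : ℝ}
    (hfar : ∀ S : Finset ι, S.Nonempty →
      ε ≤ (1 / 2) * ∑ i, |w i - (if i ∈ S then (1 : ℝ) / S.card else 0)|)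
    {c : ℝ} (hc : ∃ i, |c - w i| ≤ w i) :
    ε ≤ ∑ i, min (w i) |c - w i| := by
  set T := univ.filter fun i => |c - w i| ≤ w i
  have hT : T.Nonempty := by
    obtain ⟨i, hi⟩ := hc
    exact ⟨i, by simpa [T] using hi⟩
  calc ε ≤ (1 / 2) * ∑ i, |w i - (if i ∈ T then (1 : ℝ) / T.card else 0)| := hfar T hT
    _ ≤ ∑ i ∈ T, |w i - c| + ∑ i ∈ Tᶜ, w i := by
        linarith [sum_abs_sub_uniform_le hw hsum hT c]
    _ = ∑ i ∈ T, min (w i) |c - w i| + ∑ i ∈ Tᶜ, min (w i) |c - w i| := by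
        congr 1 <;> refine sum_congr rfl fun i hi => ?_
        · rw [min_eq_right (by simpa [T] using hi), abs_sub_comm]
        · exact (min_eq_left (by simpa [T] using hi : w i < |c - w i|).le).symm
    _ = ∑ i, min (w i) |c - w i| := sum_add_sum_compl T _

end WeightedSums

lemma mul_min_abs_sub_le {a m : ℝ} (ha : 0 ≤ a) (hm : 0 ≤ m) :
    m * min a |m - a| ≤ 2 * (a * |a - m|) := by
  rw [abs_sub_comm m a]
  rcases le_or_gt (m / 2) a with h | h
  · nlinarith [min_le_right a |a - m|, abs_nonneg (a - m)]
  · rw [abs_of_neg (by linarith : a - m < 0)]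
    nlinarith [min_le_left a (-(a - m))]

theorem stmt4_general {Ω : Type*} [Fintype Ω] [DecidableEq Ω] (p : Ω → ℝ)
    (hp : ∀ i, 0 ≤ p i) (hsum : ∑ i, p i = 1)
    (ε : ℝ) (hε : 0 < ε)
    (hfar : ∀ S : Finset Ω, S.Nonempty →
      ε ≤ (1 / 2) * ∑ i, |p i - (if i ∈ S then (1 : ℝ) / S.card else 0)|) :
    ε ^ 2 * (∑ i, p i ^ 2) ^ 2 / 64 ≤ ∑ i, p i ^ 3 - (∑ i, p i ^ 2) ^ 2 := by
  set F₂ := ∑ i, p i ^ 2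
  have hF₂ : 0 ≤ F₂ := sum_nonneg fun i _ => sq_nonneg _
  have hT : ∃ i, |F₂ - p i| ≤ p i := by
    obtain ⟨i, hi⟩ := exists_sum_sq_le hp hsum
    exact ⟨i, by rw [abs_sub_comm, abs_of_nonneg (by linarith)]; linarith⟩
  have hmin := le_sum_min_abs_sub hp hsum hfar hT
  have hmean : ε * F₂ ≤ 2 * ∑ i, p i * |p i - F₂| := by
    calc ε * F₂ ≤ ∑ i, F₂ * min (p i) |F₂ - p i| := by rw [← mul_sum]; nlinarith
      _ ≤ ∑ i, 2 * (p i * |p i - F₂|) := sum_le_sum fun i _ => mul_min_abs_sub_le (hp i) hF₂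
      _ = 2 * ∑ i, p i * |p i - F₂| := (mul_sum ..).symm
  have hcs := sq_sum_mul_abs_le_sum_mul_sq hp hsum fun i => p i - F₂
  have hvar : ∑ i, p i * (p i - F₂) ^ 2 = ∑ i, p i ^ 3 - F₂ ^ 2 := by
    simpa only [← sq, ← pow_succ'] using sum_mul_sub_sq_eq hsum p
  nlinarith [mul_nonneg hε.le hF₂]

/-- If `p` is `ε`-far in total variation from every uniform distribution on a
nonempty subset, then `F₃(p) − F₂(p)² ≥ ε² F₂(p)² / 64`. -/
theorem stmt4 {Ω : Type*} [Fintype Ω] [DecidableEq Ω] (p : Ω → ℝ)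
    (hp : ∀ i, 0 ≤ p i) (hsum : ∑ i, p i = 1)
    (ε : ℝ) (hε : 0 < ε) (hε1 : ε ≤ 1)
    (hfar : ∀ S : Finset Ω, S.Nonempty →
      ε ≤ (1 / 2) * ∑ i, |p i - (if i ∈ S then (1 : ℝ) / S.card else 0)|) :
    ε ^ 2 * (∑ i, p i ^ 2) ^ 2 / 64 ≤ ∑ i, p i ^ 3 - (∑ i, p i ^ 2) ^ 2 :=
  stmt4_general p hp hsum ε hε hfar
end

section
/- Let X_1, ..., X_m be independent nonnegative real-valued random variables and X = ∑_{j=1}^m X_j. Then for any t > 0, Pr[X ≤ E[X] − t] ≤ exp(−t^2 / (2 ∑_{j=1}^m E[X_j^2])). -/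
/-!
For `u ≥ 0` one has `e^{-u} ≤ 1 - u + u²/2`, so a nonnegative square-integrable `Y` satisfies
`E e^{-θY} ≤ 1 - θ E Y + θ²/2 E Y² ≤ exp (-θ E Y + θ²/2 E Y²)` for every `θ ≥ 0`. Independence
multiplies these bounds, giving the lower-tail moment generating function of a sub-Gaussian variable
with variance proxy `V = ∑ E X_j²`; the Chernoff bound at `θ = t / V` yields `exp (-t² / (2V))`.
-/

open MeasureTheory ProbabilityTheory Real

lemma Real.exp_neg_le_one_sub_add_sq_div_two {u : ℝ} (hu : 0 ≤ u) :
    exp (-u) ≤ 1 - u + u ^ 2 / 2 := by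
  let f : ℝ → ℝ := fun u => 1 - u + u ^ 2 / 2 - exp (-u)
  have hf : ∀ x, HasDerivAt f (x + exp (-x) - 1) x := fun x => by
    refine ((((hasDerivAt_id x).const_sub 1).add ((hasDerivAt_pow 2 x).div_const 2)).sub
      (hasDerivAt_id x).neg.exp).congr_deriv ?_
    simp only [id, Pi.neg_apply, Nat.cast_ofNat]
    ring
  have hmono : Monotone f := monotone_of_deriv_nonneg (fun x => (hf x).differentiableAt)
    fun x => by rw [(hf x).deriv]; linarith [add_one_le_exp (-x)]
  have := hmono hu
  simp only [f, neg_zero, exp_zero] at this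
  linarith

section

variable {Ω : Type*} [MeasurableSpace Ω] {μ : Measure Ω}

lemma integrable_exp_neg_mul_of_nonneg [IsFiniteMeasure μ] {Y : Ω → ℝ} (hY : AEMeasurable Y μ)
    (hnn : 0 ≤ᵐ[μ] Y) {θ : ℝ} (hθ : 0 ≤ θ) : Integrable (fun ω => exp (-θ * Y ω)) μ :=
  Integrable.of_bound (hY.const_mul (-θ)).exp.aestronglyMeasurable 1 <| hnn.mono fun ω hω => by
    rw [norm_of_nonneg (exp_pos _).le, exp_le_one_iff, neg_mul]
    exact neg_nonpos.2 (mul_nonneg hθ hω)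

lemma mgf_neg_le_exp_of_nonneg [IsProbabilityMeasure μ] {Y : Ω → ℝ} (hY : MemLp Y 2 μ)
    (hnn : 0 ≤ᵐ[μ] Y) {θ : ℝ} (hθ : 0 ≤ θ) :
    mgf Y μ (-θ) ≤ exp (-θ * ∫ ω, Y ω ∂μ + θ ^ 2 / 2 * ∫ ω, Y ω ^ 2 ∂μ) := by
  have hY1 : Integrable Y μ := hY.integrable one_le_two
  have hY2 : Integrable (fun ω => Y ω ^ 2) μ := hY.integrable_sq
  have hlin : Integrable (fun ω => 1 - θ * Y ω) μ := (integrable_const 1).sub (hY1.const_mul θ)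
  calc mgf Y μ (-θ)
      ≤ ∫ ω, (1 - θ * Y ω + θ ^ 2 / 2 * Y ω ^ 2) ∂μ := by
        refine integral_mono_ae
          (integrable_exp_neg_mul_of_nonneg hY.aestronglyMeasurable.aemeasurable hnn hθ)
          (hlin.add (hY2.const_mul _)) ?_
        filter_upwards [hnn] with ω hω
        rw [neg_mul]
        exact (exp_neg_le_one_sub_add_sq_div_two (mul_nonneg hθ hω)).trans_eq (by ring)
    _ = 1 + (-θ * ∫ ω, Y ω ∂μ + θ ^ 2 / 2 * ∫ ω, Y ω ^ 2 ∂μ) := by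
        rw [integral_add hlin (hY2.const_mul _),
          integral_sub (integrable_const 1) (hY1.const_mul θ), integral_const_mul,
          integral_const_mul, integral_const, probReal_univ, one_smul]
        ring
    _ ≤ _ := by linarith [add_one_le_exp (-θ * ∫ ω, Y ω ∂μ + θ ^ 2 / 2 * ∫ ω, Y ω ^ 2 ∂μ)]

lemma ProbabilityTheory.iIndepFun.mgf_sum_neg_le_exp [IsProbabilityMeasure μ] {ι : Type*}
    {X : ι → Ω → ℝ} (hind : iIndepFun X μ) (hL2 : ∀ j, MemLp (X j) 2 μ) (hnn : ∀ j, 0 ≤ᵐ[μ] X j)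
    (s : Finset ι) {θ : ℝ} (hθ : 0 ≤ θ) :
    mgf (∑ j ∈ s, X j) μ (-θ) ≤
      exp (-θ * ∑ j ∈ s, ∫ ω, X j ω ∂μ + θ ^ 2 / 2 * ∑ j ∈ s, ∫ ω, X j ω ^ 2 ∂μ) := by
  rw [hind.mgf_sum₀ (fun j => (hL2 j).aestronglyMeasurable.aemeasurable), Finset.mul_sum,
    Finset.mul_sum, ← Finset.sum_add_distrib, exp_sum]
  exact Finset.prod_le_prod (fun j _ => mgf_nonneg)
    fun j _ => mgf_neg_le_exp_of_nonneg (hL2 j) (hnn j) hθ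

lemma measureReal_le_sub_le_exp_of_mgf_neg_le [IsFiniteMeasure μ] {Y : Ω → ℝ} {M V t : ℝ}
    (hV : 0 < V) (ht : 0 ≤ t)
    (hint : ∀ θ, 0 ≤ θ → Integrable (fun ω => exp (-θ * Y ω)) μ)
    (hmgf : ∀ θ, 0 ≤ θ → mgf Y μ (-θ) ≤ exp (-θ * M + θ ^ 2 / 2 * V)) :
    μ.real {ω | Y ω ≤ M - t} ≤ exp (-t ^ 2 / (2 * V)) := by
  have hθ : 0 ≤ t / V := div_nonneg ht hV.le
  calc μ.real {ω | Y ω ≤ M - t}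
      ≤ exp (-(-(t / V)) * (M - t)) * mgf Y μ (-(t / V)) :=
        measure_le_le_exp_mul_mgf _ (neg_nonpos.2 hθ) (hint _ hθ)
    _ ≤ exp (t / V * (M - t)) * exp (-(t / V) * M + (t / V) ^ 2 / 2 * V) := by
        rw [neg_neg]
        exact mul_le_mul_of_nonneg_left (hmgf _ hθ) (exp_pos _).le
    _ = exp (-t ^ 2 / (2 * V)) := by
        rw [← exp_add]
        congr 1
        field_simp
        ring

end

theorem stmt9_general {Ω : Type*} [MeasurableSpace Ω] (μ : Measure Ω) [IsProbabilityMeasure μ]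
    (m : ℕ) (X : Fin m → Ω → ℝ)
    (hnn : ∀ j ω, 0 ≤ X j ω)
    (hL2 : ∀ j, MeasureTheory.MemLp (X j) 2 μ)
    (hind : ProbabilityTheory.iIndepFun X μ)
    (t : ℝ) (ht : 0 < t) :
    μ {ω | ∑ j, X j ω ≤ (∑ j, ∫ ω, X j ω ∂μ) - t}
      ≤ ENNReal.ofReal
          (Real.exp (-t ^ 2 / (2 * ∑ j, ∫ ω, (X j ω) ^ 2 ∂μ))) := by
  have hV0 : 0 ≤ ∑ j, ∫ ω, X j ω ^ 2 ∂μ :=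
    Finset.sum_nonneg fun j _ => integral_nonneg fun ω => sq_nonneg (X j ω)
  rcases hV0.eq_or_lt with hV | hV
  · -- `x / 0 = 0`, so the claimed bound is `exp 0 = 1`
    simp [← hV, prob_le_one]
  have hsum_meas : AEMeasurable (∑ j, X j) μ :=
    Finset.aemeasurable_sum _ fun j _ => (hL2 j).aestronglyMeasurable.aemeasurable
  have hsum_nn : 0 ≤ᵐ[μ] ∑ j, X j := ae_of_all _ fun ω => by
    simpa only [Finset.sum_apply, Pi.zero_apply] using Finset.sum_nonneg fun j _ => hnn j ω
  have key := measureReal_le_sub_le_exp_of_mgf_neg_le hV ht.le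
    (fun θ hθ => integrable_exp_neg_mul_of_nonneg hsum_meas hsum_nn hθ)
    (fun θ hθ => hind.mgf_sum_neg_le_exp hL2 (fun j => ae_of_all _ (hnn j)) Finset.univ hθ)
  rw [← ofReal_measureReal]
  simpa only [Finset.sum_apply] using ENNReal.ofReal_le_ofReal key

/-- Lower-tail bound for sums of independent nonnegative random variables:
`Pr[X ≤ E[X] − t] ≤ exp(−t² / (2 ∑ E[X_j²]))`. -/
theorem stmt9 {Ω : Type*} [MeasurableSpace Ω] (μ : Measure Ω) [IsProbabilityMeasure μ]
    (m : ℕ) (X : Fin m → Ω → ℝ)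
    (hmeas : ∀ j, Measurable (X j))
    (hnn : ∀ j ω, 0 ≤ X j ω)
    (hL2 : ∀ j, MeasureTheory.MemLp (X j) 2 μ)
    (hind : ProbabilityTheory.iIndepFun X μ)
    (t : ℝ) (ht : 0 < t) :
    μ {ω | ∑ j, X j ω ≤ (∑ j, ∫ ω, X j ω ∂μ) - t}
      ≤ ENNReal.ofReal
          (Real.exp (-t ^ 2 / (2 * ∑ j, ∫ ω, (X j ω) ^ 2 ∂μ))) :=
  stmt9_general μ m X hnn hL2 hind t ht
end

section
/- Let p be a probability distribution on a finite set Ω. If p_i ≤ L for all i and d_TV(p, u_S) ≥ ε for every nonempty S ⊆ Ω, then for every x ∈ [0, L], the set S_l = {i : p_i ≤ x/2} and its complement S_h satisfy ∑_{i∈S_l} p_i + ∑_{i∈S_h} |x − p_i| ≥ ε/2, and hence at least one of ∑_{i∈S_l} p_i ≥ ε/4 or ∑_{i∈S_h} |x − p_i| ≥ ε/4 holds. -/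
/-!
Fix `x` and let `S = {i : |x - p i| ≤ p i}`, so that `∑ i, min (p i) |x - p i|` is
`B + A` with `B = ∑_{i ∈ S} |x - p i|` and `A = p(Sᶜ)`. Comparing `p` with `u_S` through the
point `x`, `∑_{i ∈ S} |p i - 1/|S|| ≤ B + | |S| x - 1 |`, and
`|S| x - 1 = ∑_{i ∈ S} (x - p i) - A` gives `| |S| x - 1 | ≤ B + A`. Hence
`2 ε ≤ 2 d_TV(p, u_S) ≤ 2 (B + A)`, i.e. the min-sum is at least `ε`. Splitting the sum at the
threshold `x / 2` and bounding the min by `p i` below it and by `|x - p i|` above it gives the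
claim.
-/

open Finset

theorem sum_min_le_sum_filter_add_sum_filter_not {ι M : Type*} [AddCommMonoid M] [LinearOrder M]
    [IsOrderedAddMonoid M] (s : Finset ι) (f g : ι → M) (P : ι → Prop) [DecidablePred P] :
    ∑ i ∈ s, min (f i) (g i) ≤ ∑ i ∈ s.filter P, f i + ∑ i ∈ s.filter (¬ P ·), g i := by
  rw [← sum_filter_add_sum_filter_not s P]
  gcongr with i _ i _
  · exact min_le_left _ _
  · exact min_le_right _ _

section

variable {Ω : Type*} [Fintype Ω] [DecidableEq Ω] {p : Ω → ℝ}

theorem sum_min_abs_sub_eq (x : ℝ) :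
    ∑ i, min (p i) |x - p i| =
      ∑ i ∈ univ.filter (fun i => |x - p i| ≤ p i), |x - p i|
        + ∑ i ∈ (univ.filter fun i => |x - p i| ≤ p i)ᶜ, p i := by
  rw [← sum_add_sum_compl (univ.filter fun i => |x - p i| ≤ p i)]
  congr 1
  · refine sum_congr rfl fun i hi => min_eq_right ?_
    simpa using hi
  · refine sum_congr rfl fun i hi => min_eq_left ?_
    simpa using (not_le.mp (by simpa using hi)).le

theorem abs_card_mul_sub_one_le (hp : ∀ i, 0 ≤ p i) (hsum : ∑ i, p i = 1) (S : Finset Ω)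
    (x : ℝ) : |#S * x - 1| ≤ ∑ i ∈ S, |x - p i| + ∑ i ∈ Sᶜ, p i := by
  have hsplit : #S * x - 1 = ∑ i ∈ S, (x - p i) - ∑ i ∈ Sᶜ, p i := by
    rw [sum_sub_distrib, sum_const, nsmul_eq_mul, ← hsum, ← sum_add_sum_compl S]
    ring
  calc |#S * x - 1| ≤ |∑ i ∈ S, (x - p i)| + |∑ i ∈ Sᶜ, p i| := hsplit ▸ abs_sub _ _
    _ ≤ ∑ i ∈ S, |x - p i| + ∑ i ∈ Sᶜ, p i := by
      rw [abs_of_nonneg (sum_nonneg fun i _ => hp i)]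
      gcongr
      exact abs_sum_le_sum_abs _ _

theorem sum_abs_sub_uniform_le_s16 (hp : ∀ i, 0 ≤ p i) (hsum : ∑ i, p i = 1) {S : Finset Ω}
    (hS : S.Nonempty) (x : ℝ) :
    ∑ i, |p i - (if i ∈ S then (1 : ℝ) / #S else 0)| ≤
      2 * (∑ i ∈ S, |x - p i| + ∑ i ∈ Sᶜ, p i) := by
  have hk : (0 : ℝ) < #S := by exact_mod_cast hS.card_pos
  have hin : ∑ i ∈ S, |p i - 1 / #S| ≤ ∑ i ∈ S, |x - p i| + |#S * x - 1| :=
    calc ∑ i ∈ S, |p i - 1 / #S| ≤ ∑ i ∈ S, (|x - p i| + |x - 1 / #S|) :=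
          sum_le_sum fun i _ => abs_sub_comm (p i) x ▸ abs_sub_le (p i) x _
      _ = ∑ i ∈ S, |x - p i| + |#S * x - 1| := by
          rw [sum_add_distrib, sum_const, nsmul_eq_mul, ← abs_of_pos hk, ← abs_mul,
            abs_of_pos hk, mul_sub, mul_one_div_cancel hk.ne']
  have hsplit : ∑ i, |p i - (if i ∈ S then (1 : ℝ) / #S else 0)| =
      ∑ i ∈ S, |p i - 1 / #S| + ∑ i ∈ Sᶜ, p i := by
    rw [← sum_add_sum_compl S]
    congr 1
    · exact sum_congr rfl fun i hi => by rw [if_pos hi]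
    · exact sum_congr rfl fun i hi => by
        rw [if_neg (mem_compl.mp hi), sub_zero, abs_of_nonneg (hp i)]
  rw [hsplit]
  linarith [abs_card_mul_sub_one_le hp hsum S x, sum_nonneg fun i (_ : i ∈ Sᶜ) => hp i]

theorem le_sum_min_abs_sub_of_far {ε : ℝ} (hp : ∀ i, 0 ≤ p i) (hsum : ∑ i, p i = 1)
    (hε1 : ε ≤ 1)
    (hfar : ∀ S : Finset Ω, S.Nonempty →
      ε ≤ (1 / 2) * ∑ i, |p i - (if i ∈ S then (1 : ℝ) / S.card else 0)|)
    (x : ℝ) : ε ≤ ∑ i, min (p i) |x - p i| := by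
  rw [sum_min_abs_sub_eq]
  set S := univ.filter fun i => |x - p i| ≤ p i
  rcases S.eq_empty_or_nonempty with hS | hS
  · simpa [hS, hsum] using hε1
  · linarith [hfar S hS, sum_abs_sub_uniform_le_s16 hp hsum hS x]

end

theorem stmt16_general {Ω : Type*} [Fintype Ω] [DecidableEq Ω] (p : Ω → ℝ)
    (hp : ∀ i, 0 ≤ p i) (hsum : ∑ i, p i = 1)
    (L ε : ℝ) (hε : 0 < ε) (hε1 : ε ≤ 1)
    (hfar : ∀ S : Finset Ω, S.Nonempty →
      ε ≤ (1 / 2) * ∑ i, |p i - (if i ∈ S then (1 : ℝ) / S.card else 0)|) :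
    ∀ x ∈ Set.Icc (0 : ℝ) L,
      ε / 2 ≤ (∑ i ∈ Finset.univ.filter fun i => p i ≤ x / 2, p i)
          + ∑ i ∈ Finset.univ.filter fun i => ¬ p i ≤ x / 2, |x - p i| ∧
        (ε / 4 ≤ ∑ i ∈ Finset.univ.filter fun i => p i ≤ x / 2, p i ∨
          ε / 4 ≤ ∑ i ∈ Finset.univ.filter fun i => ¬ p i ≤ x / 2, |x - p i|) := by
  intro x _
  have hmin := le_sum_min_abs_sub_of_far hp hsum hε1 hfar x
  have hsplit := sum_min_le_sum_filter_add_sum_filter_not univ p (fun i => |x - p i|)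
    (fun i => p i ≤ x / 2)
  have hhalf : ε / 2 ≤ (∑ i ∈ univ.filter fun i => p i ≤ x / 2, p i)
      + ∑ i ∈ univ.filter fun i => ¬ p i ≤ x / 2, |x - p i| := by
    linarith
  exact ⟨hhalf, (le_or_gt (ε / 4) _).imp_right fun h => by linarith⟩

/-- If `p_i ≤ L` for all `i` and `p` is `ε`-far from every uniform distribution on a
nonempty subset, then for every `x ∈ [0, L]`, with `S_l = {i : p_i ≤ x/2}` and
`S_h = S_lᶜ`, we have `∑_{S_l} p_i + ∑_{S_h} |x − p_i| ≥ ε/2`, hence one of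
`∑_{S_l} p_i ≥ ε/4` or `∑_{S_h} |x − p_i| ≥ ε/4` holds. -/
theorem stmt16 {Ω : Type*} [Fintype Ω] [DecidableEq Ω] [Nonempty Ω] (p : Ω → ℝ)
    (hp : ∀ i, 0 ≤ p i) (hsum : ∑ i, p i = 1)
    (L ε : ℝ) (hL0 : 0 < L) (hL1 : L ≤ 1) (hε : 0 < ε) (hε1 : ε ≤ 1)
    (hbd : ∀ i, p i ≤ L)
    (hfar : ∀ S : Finset Ω, S.Nonempty →
      ε ≤ (1 / 2) * ∑ i, |p i - (if i ∈ S then (1 : ℝ) / S.card else 0)|) :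
    ∀ x ∈ Set.Icc (0 : ℝ) L,
      ε / 2 ≤ (∑ i ∈ Finset.univ.filter fun i => p i ≤ x / 2, p i)
          + ∑ i ∈ Finset.univ.filter fun i => ¬ p i ≤ x / 2, |x - p i| ∧
        (ε / 4 ≤ ∑ i ∈ Finset.univ.filter fun i => p i ≤ x / 2, p i ∨
          ε / 4 ≤ ∑ i ∈ Finset.univ.filter fun i => ¬ p i ≤ x / 2, |x - p i|) :=
  stmt16_general p hp hsum L ε hε hε1 hfar
end
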